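/- Short-maturity at-the-money implied volatility skew of the fractional Bergomi model, rough case: let H ∈ (0, 1/2), v > 0, σ₀ > 0 and ρ ∈ [−1,1], and define F(T) = (ρ/(σ₀ T²)) ∫₀^T ∫_r^T (σ₀ v √(2H)/2) e^{−v² u^{2H}/8} (u−r)^{H−1/2} du dr for T > 0. Then lim_{T → 0⁺} T^{1/2−H} F(T) = 2ρ v √(2H) / (3 + 4H(2+H)). -/

import Mathlib

open Real MeasureTheory Set Filter

/-- The rescaled at-the-money implied volatility skew functional of the
fractional Bergomi model:
`F(T) = (ρ/(σ₀ T²)) ∫₀^T ∫_r^T (σ₀ v √(2H)/2) e^{-v² u^{2H}/8} (u-r)^{H-1/2} du dr`. -/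
noncomputable def skewF (H v σ₀ ρ T : ℝ) : ℝ :=
  (ρ / (σ₀ * T ^ 2)) *
    ∫ r in (0 : ℝ)..T, ∫ u in r..T,
      (σ₀ * v * Real.sqrt (2 * H) / 2) * Real.exp (-(v ^ 2 * u ^ (2 * H)) / 8)
        * (u - r) ^ (H - 1 / 2)

section Aux

variable {H v : ℝ}

private lemma contg (hH : 0 < H) :
    Continuous fun u : ℝ => Real.exp (-(v ^ 2 * u ^ (2 * H)) / 8) :=
  Real.continuous_exp.comp <|
    ((continuous_const.mul (Real.continuous_rpow_const (by positivity))).neg).div_const 8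

private lemma integ_pow {p : ℝ} (hp : -1 < p) (r T : ℝ) :
    IntervalIntegrable (fun u : ℝ => (u - r) ^ p) volume r T := by
  have h := (intervalIntegral.intervalIntegrable_rpow' (a := 0) (b := T - r) hp).comp_sub_right r
  simpa using h

private lemma integ_inner (hH : 0 < H) {p : ℝ} (hp : -1 < p) (r T : ℝ) :
    IntervalIntegrable
      (fun u : ℝ => Real.exp (-(v ^ 2 * u ^ (2 * H)) / 8) * (u - r) ^ p) volume r T :=
  (integ_pow hp r T).continuousOn_mul (contg hH).continuousOn

private lemma integ_inner' (hH : 0 < H) {p : ℝ} (hp : -1 < p) (r a b : ℝ) :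
    IntervalIntegrable
      (fun x : ℝ => Real.exp (-(v ^ 2 * (x + r) ^ (2 * H)) / 8) * x ^ p) volume a b :=
  (intervalIntegral.intervalIntegrable_rpow' hp).continuousOn_mul
    ((contg hH).comp (continuous_id.add continuous_const)).continuousOn

private lemma inner_subst {p : ℝ} (r T : ℝ) :
    (∫ u in r..T, Real.exp (-(v ^ 2 * u ^ (2 * H)) / 8) * (u - r) ^ p)
      = ∫ x in (0 : ℝ)..(T - r), Real.exp (-(v ^ 2 * (x + r) ^ (2 * H)) / 8) * x ^ p := by
  have h := intervalIntegral.integral_comp_sub_right (a := r) (b := T)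
    (fun x : ℝ => Real.exp (-(v ^ 2 * (x + r) ^ (2 * H)) / 8) * x ^ p) r
  simpa using h

private lemma pow_integral {p : ℝ} (hp : -1 < p) (r T : ℝ) :
    (∫ u in r..T, (u - r) ^ p) = (T - r) ^ (p + 1) / (p + 1) := by
  have h := intervalIntegral.integral_comp_sub_right (a := r) (b := T) (fun x : ℝ => x ^ p) r
  rw [h, sub_self, integral_rpow (Or.inl hp),
    Real.zero_rpow (by linarith), sub_zero]

private lemma pow_integral' {q : ℝ} (hq : -1 < q) (T : ℝ) :
    (∫ r in (0 : ℝ)..T, (T - r) ^ q) = T ^ (q + 1) / (q + 1) := by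
  have h := intervalIntegral.integral_comp_sub_left (a := (0 : ℝ)) (b := T)
    (fun x : ℝ => x ^ q) T
  rw [h, sub_self, sub_zero, integral_rpow (Or.inl hq),
    Real.zero_rpow (by linarith), sub_zero]

private lemma inner_bounds (hH : 0 < H) (hH2 : H < 1 / 2)
    {r T : ℝ} (hr : 0 ≤ r) (hrT : r ≤ T) :
    Real.exp (-(v ^ 2 * T ^ (2 * H)) / 8) * ((T - r) ^ (H + 1 / 2) / (H + 1 / 2))
      ≤ (∫ u in r..T, Real.exp (-(v ^ 2 * u ^ (2 * H)) / 8) * (u - r) ^ (H - 1 / 2))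
    ∧ (∫ u in r..T, Real.exp (-(v ^ 2 * u ^ (2 * H)) / 8) * (u - r) ^ (H - 1 / 2))
      ≤ (T - r) ^ (H + 1 / 2) / (H + 1 / 2) := by
  have hp : (-1 : ℝ) < H - 1 / 2 := by linarith
  have hpe : H - 1 / 2 + 1 = H + 1 / 2 := by ring
  constructor
  · have hmono : ∀ x ∈ Icc r T,
        Real.exp (-(v ^ 2 * T ^ (2 * H)) / 8) * (x - r) ^ (H - 1 / 2)
          ≤ Real.exp (-(v ^ 2 * x ^ (2 * H)) / 8) * (x - r) ^ (H - 1 / 2) := by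
      intro x hx
      apply mul_le_mul_of_nonneg_right _ (Real.rpow_nonneg (by linarith [hx.1]) _)
      apply Real.exp_le_exp.2
      have hxx : x ^ (2 * H) ≤ T ^ (2 * H) :=
        Real.rpow_le_rpow (le_trans hr hx.1) hx.2 (by positivity)
      have h2 := mul_le_mul_of_nonneg_left hxx (sq_nonneg v)
      linarith
    have h := intervalIntegral.integral_mono_on hrT
      ((integ_pow hp r T).const_mul _) (integ_inner hH hp r T) hmono
    rwa [intervalIntegral.integral_const_mul, pow_integral hp, hpe] at h
  · have hmono : ∀ x ∈ Icc r T,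
        Real.exp (-(v ^ 2 * x ^ (2 * H)) / 8) * (x - r) ^ (H - 1 / 2)
          ≤ (x - r) ^ (H - 1 / 2) := by
      intro x hx
      apply mul_le_of_le_one_left (Real.rpow_nonneg (by linarith [hx.1]) _)
      apply Real.exp_le_one_iff.2
      have h0 : 0 ≤ x ^ (2 * H) := Real.rpow_nonneg (le_trans hr hx.1) _
      nlinarith [sq_nonneg v]
    have h := intervalIntegral.integral_mono_on hrT
      (integ_inner hH hp r T) (integ_pow hp r T) hmono
    rwa [pow_integral hp, hpe] at h

private lemma inner_antitone (hH : 0 < H) (hH2 : H < 1 / 2) (T : ℝ) :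
    AntitoneOn
      (fun r => ∫ u in r..T, Real.exp (-(v ^ 2 * u ^ (2 * H)) / 8) * (u - r) ^ (H - 1 / 2))
      (Icc 0 T) := by
  have hp : (-1 : ℝ) < H - 1 / 2 := by linarith
  intro r₁ hr₁ r₂ hr₂ h12
  simp only
  rw [inner_subst, inner_subst]
  have step1 :
      (∫ x in (0 : ℝ)..(T - r₂),
          Real.exp (-(v ^ 2 * (x + r₂) ^ (2 * H)) / 8) * x ^ (H - 1 / 2))
      ≤ ∫ x in (0 : ℝ)..(T - r₂),
          Real.exp (-(v ^ 2 * (x + r₁) ^ (2 * H)) / 8) * x ^ (H - 1 / 2) := by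
    apply intervalIntegral.integral_mono_on (by linarith [hr₂.2])
      (integ_inner' hH hp r₂ _ _) (integ_inner' hH hp r₁ _ _)
    intro x hx
    apply mul_le_mul_of_nonneg_right _ (Real.rpow_nonneg hx.1 _)
    apply Real.exp_le_exp.2
    have hxx : (x + r₁) ^ (2 * H) ≤ (x + r₂) ^ (2 * H) :=
      Real.rpow_le_rpow (by linarith [hx.1, hr₁.1]) (by linarith) (by positivity)
    have h2 := mul_le_mul_of_nonneg_left hxx (sq_nonneg v)
    linarith
  have step2 :
      (∫ x in (0 : ℝ)..(T - r₂),
          Real.exp (-(v ^ 2 * (x + r₁) ^ (2 * H)) / 8) * x ^ (H - 1 / 2))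
      ≤ ∫ x in (0 : ℝ)..(T - r₁),
          Real.exp (-(v ^ 2 * (x + r₁) ^ (2 * H)) / 8) * x ^ (H - 1 / 2) := by
    apply intervalIntegral.integral_mono_interval le_rfl (by linarith [hr₂.2]) (by linarith)
    · filter_upwards [ae_restrict_mem measurableSet_Ioc] with x hx
      exact mul_nonneg (Real.exp_pos _).le (Real.rpow_nonneg hx.1.le _)
    · exact integ_inner' hH hp r₁ _ _
  linarith

end Aux

/-- short-maturity ATM skew of the fractional Bergomi model,
rough case `H < 1/2`. -/
theorem stmt_18 (H v σ₀ ρ : ℝ) (hH : H ∈ Set.Ioo (0 : ℝ) (1 / 2))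
    (hv : 0 < v) (hσ₀ : 0 < σ₀) (hρ : ρ ∈ Set.Icc (-1 : ℝ) 1) :
    Filter.Tendsto (fun T : ℝ => T ^ (1 / 2 - H) * skewF H v σ₀ ρ T)
      (nhdsWithin 0 (Set.Ioi 0))
      (nhds (2 * ρ * v * Real.sqrt (2 * H) / (3 + 4 * H * (2 + H)))) := by
  obtain ⟨hH0, hH2⟩ := hH
  have hp : (-1 : ℝ) < H - 1 / 2 := by linarith
  have hq1 : (0 : ℝ) < H + 1 / 2 := by linarith
  have hq2 : (0 : ℝ) < H + 3 / 2 := by linarith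
  set L : ℝ := 1 / ((H + 1 / 2) * (H + 3 / 2)) with hL
  set C : ℝ := ρ * (v * Real.sqrt (2 * H) / 2) with hC
  set Φ : ℝ → ℝ := fun T => T ^ (1 / 2 - H) / T ^ 2 *
      ∫ r in (0 : ℝ)..T, ∫ u in r..T,
        Real.exp (-(v ^ 2 * u ^ (2 * H)) / 8) * (u - r) ^ (H - 1 / 2) with hΦ
  -- rewriting the goal function
  have key : ∀ T : ℝ, 0 < T →
      T ^ (1 / 2 - H) * skewF H v σ₀ ρ T = C * Φ T := by
    intro T hT
    rw [hΦ, hC]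
    unfold skewF
    have : ∀ r : ℝ, (∫ u in r..T,
        σ₀ * v * Real.sqrt (2 * H) / 2 * Real.exp (-(v ^ 2 * u ^ (2 * H)) / 8)
          * (u - r) ^ (H - 1 / 2))
        = (σ₀ * v * Real.sqrt (2 * H) / 2) *
            ∫ u in r..T, Real.exp (-(v ^ 2 * u ^ (2 * H)) / 8) * (u - r) ^ (H - 1 / 2) := by
      intro r
      rw [← intervalIntegral.integral_const_mul]
      congr 1
      ext u
      ring
    simp_rw [this, intervalIntegral.integral_const_mul]
    have hT2 : (T : ℝ) ^ 2 ≠ 0 := pow_ne_zero _ hT.ne'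
    field_simp
  -- bounds for Φ
  have bounds : ∀ T : ℝ, 0 < T →
      Real.exp (-(v ^ 2 * T ^ (2 * H)) / 8) * L ≤ Φ T ∧ Φ T ≤ L := by
    intro T hT
    have hInt : IntervalIntegrable
        (fun r => ∫ u in r..T,
          Real.exp (-(v ^ 2 * u ^ (2 * H)) / 8) * (u - r) ^ (H - 1 / 2)) volume 0 T := by
      apply AntitoneOn.intervalIntegrable
      rw [uIcc_of_le hT.le]
      exact inner_antitone hH0 hH2 T
    have hIntLow : IntervalIntegrable
        (fun r : ℝ => Real.exp (-(v ^ 2 * T ^ (2 * H)) / 8)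
          * ((T - r) ^ (H + 1 / 2) / (H + 1 / 2))) volume 0 T := by
      apply Continuous.intervalIntegrable
      exact continuous_const.mul (((Real.continuous_rpow_const hq1.le).comp
        (continuous_const.sub continuous_id)).div_const _)
    have hIntUp : IntervalIntegrable
        (fun r : ℝ => (T - r) ^ (H + 1 / 2) / (H + 1 / 2)) volume 0 T := by
      apply Continuous.intervalIntegrable
      exact (((Real.continuous_rpow_const hq1.le).comp
        (continuous_const.sub continuous_id)).div_const _)
    have hq1' : (-1 : ℝ) < H + 1 / 2 := by linarith
    have hupval : (∫ r in (0 : ℝ)..T, (T - r) ^ (H + 1 / 2) / (H + 1 / 2))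
        = T ^ (H + 3 / 2) / ((H + 1 / 2) * (H + 3 / 2)) := by
      rw [intervalIntegral.integral_div, pow_integral' hq1' T,
        show H + 1 / 2 + 1 = H + 3 / 2 by ring, div_div]
      congr 1
      ring
    have hlowval : (∫ r in (0 : ℝ)..T, Real.exp (-(v ^ 2 * T ^ (2 * H)) / 8)
          * ((T - r) ^ (H + 1 / 2) / (H + 1 / 2)))
        = Real.exp (-(v ^ 2 * T ^ (2 * H)) / 8)
          * (T ^ (H + 3 / 2) / ((H + 1 / 2) * (H + 3 / 2))) := by
      rw [intervalIntegral.integral_const_mul, hupval]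
    have hTpow : T ^ (1 / 2 - H) / T ^ 2 * T ^ (H + 3 / 2) = 1 := by
      rw [div_mul_eq_mul_div, ← Real.rpow_add hT,
        show 1 / 2 - H + (H + 3 / 2) = 2 by ring,
        show ((2 : ℝ)) = ((2 : ℕ) : ℝ) by norm_num, Real.rpow_natCast]
      exact div_self (pow_ne_zero _ hT.ne')
    have ha : 0 ≤ T ^ (1 / 2 - H) / T ^ 2 :=
      div_nonneg (Real.rpow_nonneg hT.le _) (by positivity)
    constructor
    · have hlow : (∫ r in (0 : ℝ)..T, Real.exp (-(v ^ 2 * T ^ (2 * H)) / 8)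
            * ((T - r) ^ (H + 1 / 2) / (H + 1 / 2)))
          ≤ ∫ r in (0 : ℝ)..T, ∫ u in r..T,
              Real.exp (-(v ^ 2 * u ^ (2 * H)) / 8) * (u - r) ^ (H - 1 / 2) :=
        intervalIntegral.integral_mono_on hT.le hIntLow hInt
          (fun r hr => (inner_bounds hH0 hH2 hr.1 hr.2).1)
      have h1 := mul_le_mul_of_nonneg_left hlow ha
      rw [hlowval] at h1
      calc Real.exp (-(v ^ 2 * T ^ (2 * H)) / 8) * L
          = Real.exp (-(v ^ 2 * T ^ (2 * H)) / 8)
            * (T ^ (1 / 2 - H) / T ^ 2 * T ^ (H + 3 / 2)) * L := by rw [hTpow]; ring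
        _ = T ^ (1 / 2 - H) / T ^ 2 * (Real.exp (-(v ^ 2 * T ^ (2 * H)) / 8)
            * (T ^ (H + 3 / 2) / ((H + 1 / 2) * (H + 3 / 2)))) := by rw [hL]; ring
        _ ≤ Φ T := h1
    · have hup : (∫ r in (0 : ℝ)..T, ∫ u in r..T,
              Real.exp (-(v ^ 2 * u ^ (2 * H)) / 8) * (u - r) ^ (H - 1 / 2))
          ≤ ∫ r in (0 : ℝ)..T, (T - r) ^ (H + 1 / 2) / (H + 1 / 2) :=
        intervalIntegral.integral_mono_on hT.le hInt hIntUp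
          (fun r hr => (inner_bounds hH0 hH2 hr.1 hr.2).2)
      have h1 := mul_le_mul_of_nonneg_left hup ha
      rw [hupval] at h1
      calc Φ T ≤ T ^ (1 / 2 - H) / T ^ 2
            * (T ^ (H + 3 / 2) / ((H + 1 / 2) * (H + 3 / 2))) := h1
        _ = T ^ (1 / 2 - H) / T ^ 2 * T ^ (H + 3 / 2) * (1 / ((H + 1 / 2) * (H + 3 / 2))) := by
            ring
        _ = L := by rw [hTpow, hL]; ring
  -- the squeeze
  have hΦlim : Tendsto Φ (nhdsWithin 0 (Set.Ioi 0)) (nhds L) := by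
    have hexp : Tendsto (fun T : ℝ => Real.exp (-(v ^ 2 * T ^ (2 * H)) / 8))
        (nhdsWithin 0 (Set.Ioi 0)) (nhds 1) := by
      have h1 := ((contg (v := v) hH0).continuousAt (x := 0)).tendsto.mono_left
        (nhdsWithin_le_nhds (s := Set.Ioi (0 : ℝ)))
      have h0 : Real.exp (-(v ^ 2 * (0 : ℝ) ^ (2 * H)) / 8) = 1 := by
        rw [Real.zero_rpow (by positivity), mul_zero, neg_zero, zero_div, Real.exp_zero]
      rwa [h0] at h1
    have hlow : Tendsto (fun T : ℝ => Real.exp (-(v ^ 2 * T ^ (2 * H)) / 8) * L)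
        (nhdsWithin 0 (Set.Ioi 0)) (nhds L) := by
      simpa using hexp.mul_const L
    apply tendsto_of_tendsto_of_tendsto_of_le_of_le' hlow tendsto_const_nhds
    · exact eventually_of_mem self_mem_nhdsWithin fun T hT => (bounds T hT).1
    · exact eventually_of_mem self_mem_nhdsWithin fun T hT => (bounds T hT).2
  have hfinal : Tendsto (fun T => C * Φ T) (nhdsWithin 0 (Set.Ioi 0)) (nhds (C * L)) :=
    hΦlim.const_mul C
  have heq : (fun T : ℝ => T ^ (1 / 2 - H) * skewF H v σ₀ ρ T)
      =ᶠ[nhdsWithin 0 (Set.Ioi 0)] fun T => C * Φ T :=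
    eventually_of_mem self_mem_nhdsWithin fun T hT => key T hT
  rw [Filter.tendsto_congr' heq]
  have hCL : C * L = 2 * ρ * v * Real.sqrt (2 * H) / (3 + 4 * H * (2 + H)) := by
    rw [hC, hL]
    have d3 : (3 + 4 * H * (2 + H)) ≠ 0 := by positivity
    field_simp
    ring
  rw [← hCL]
  exact hfinal
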